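/- Let k ≥ 2 be an integer, P' = P'_{8·3^k} the presented group ⟨x, y, z ∣ x² = (xy)², (xy)² = y², z x z^{-1} = y, z y z^{-1} = x y, z^{3^k} = 1⟩, ζ_n = e^{2πi/n}, and ω = ζ_3. For an integer j, let ϱ_j : P' → GL(2,ℂ) be a group homomorphism with ϱ_j(x) = [[0, ω²],[-ω, 0]], ϱ_j(y) = [[ω², 1],[ω², -ω²]], and ϱ_j(z) = ζ_{3^k}^j · [[0, ω],[-ω², -1]]. Then the representation of P' on ℂ² given by ϱ_j is irreducible, i.e. ℂ² has no P'-invariant subspace other than 0 and ℂ². -/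

import Mathlib

/-- The relations of the presented group
`P'_{8·3^k} = ⟨x, y, z ∣ x² = (xy)², (xy)² = y², z x z⁻¹ = y, z y z⁻¹ = x y, z^{3^k} = 1⟩`,
where `x` is the first generator, `y` the second and `z` the third one. -/
def Prels (k : ℕ) : Set (FreeGroup (Fin 3)) :=
  {FreeGroup.of 0 ^ 2 * ((FreeGroup.of 0 * FreeGroup.of 1) ^ 2)⁻¹,
   (FreeGroup.of 0 * FreeGroup.of 1) ^ 2 * (FreeGroup.of 1 ^ 2)⁻¹,
   FreeGroup.of 2 * FreeGroup.of 0 * (FreeGroup.of 2)⁻¹ * (FreeGroup.of 1)⁻¹,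
   FreeGroup.of 2 * FreeGroup.of 1 * (FreeGroup.of 2)⁻¹ *
     (FreeGroup.of 0 * FreeGroup.of 1)⁻¹,
   FreeGroup.of 2 ^ (3 ^ k)}

/-- The presented group `P'_{8·3^k}`. -/
abbrev PGroup (k : ℕ) : Type := PresentedGroup (Prels k)

/-- The generator `x` of `P'_{8·3^k}`. -/
noncomputable def Px (k : ℕ) : PGroup k := PresentedGroup.of 0

/-- The generator `y` of `P'_{8·3^k}`. -/
noncomputable def Py (k : ℕ) : PGroup k := PresentedGroup.of 1

/-- The generator `z` of `P'_{8·3^k}`. -/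
noncomputable def Pz (k : ℕ) : PGroup k := PresentedGroup.of 2

/-- `ζ_n = e^{2πi/n}`. -/
noncomputable def zeta (n : ℕ) : ℂ := Complex.exp (2 * Real.pi * Complex.I / n)

/-- `ω = ζ_3 = e^{2πi/3}`. -/
noncomputable def omg : ℂ := zeta 3

/-- For `k ≥ 2`, `P' = P'_{8·3^k}` and an integer `j`, any group homomorphism
`ϱ_j : P' → GL(2,ℂ)` with `ϱ_j(x) = [[0, ω²],[-ω, 0]]`, `ϱ_j(y) = [[ω², 1],[ω², -ω²]]`
and `ϱ_j(z) = ζ_{3^k}^j · [[0, ω],[-ω², -1]]` gives an irreducible representation of `P'`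
on `ℂ²`: there is no `P'`-invariant subspace other than `0` and `ℂ²`. -/
lemma span2 (W : Submodule ℂ (Fin 2 → ℂ)) {u v : Fin 2 → ℂ} (hu : u ∈ W) (hv : v ∈ W)
    (h : u 0 * v 1 - u 1 * v 0 ≠ 0) : W = ⊤ := by
  rw [eq_top_iff]
  intro g _
  have hg : g = ((g 0 * v 1 - g 1 * v 0)/(u 0 * v 1 - u 1 * v 0)) • u
      + ((u 0 * g 1 - u 1 * g 0)/(u 0 * v 1 - u 1 * v 0)) • v := by
    funext i
    fin_cases i <;>
      (simp only [Fin.zero_eta, Fin.mk_one, Pi.add_apply, Pi.smul_apply, smul_eq_mul]; rw [div_mul_eq_mul_div, div_mul_eq_mul_div, ← add_div, eq_div_iff h]; ring)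
  rw [hg]
  exact W.add_mem (W.smul_mem _ hu) (W.smul_mem _ hv)


theorem irreducible_two_dim_rep_PGroup (k : ℕ) (hk : 2 ≤ k) (j : ℤ)
    (ϱ : PGroup k →* Matrix.GeneralLinearGroup (Fin 2) ℂ)
    (hx : (ϱ (Px k) : Matrix (Fin 2) (Fin 2) ℂ) = !![0, omg ^ 2; -omg, 0])
    (hy : (ϱ (Py k) : Matrix (Fin 2) (Fin 2) ℂ) = !![omg ^ 2, 1; omg ^ 2, -omg ^ 2])
    (hz : (ϱ (Pz k) : Matrix (Fin 2) (Fin 2) ℂ) =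
        zeta (3 ^ k) ^ j • !![0, omg; -omg ^ 2, -1]) :
    ∀ W : Submodule ℂ (Fin 2 → ℂ),
      (∀ (g : PGroup k), ∀ w ∈ W, (ϱ g : Matrix (Fin 2) (Fin 2) ℂ).mulVec w ∈ W) →
      W = ⊥ ∨ W = ⊤ := by
  -- basic facts about ω
  have hprim : IsPrimitiveRoot omg 3 := by
    have := Complex.isPrimitiveRoot_exp 3 (by norm_num)
    simpa [omg, zeta] using this
  have h3 : omg ^ 3 = 1 := hprim.pow_eq_one
  have hne1 : omg ≠ 1 := hprim.ne_one (by norm_num)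
  have hsum : omg ^ 2 + omg + 1 = 0 := by
    have hfac : (omg - 1) * (omg ^ 2 + omg + 1) = 0 := by linear_combination h3
    rcases mul_eq_zero.mp hfac with h | h
    · exact absurd (sub_eq_zero.mp h) hne1
    · exact h
  have hne0 : omg ≠ 0 := by
    intro h; rw [h] at h3; norm_num at h3
  intro W hW
  by_cases hbot : W = ⊥
  · exact Or.inl hbot
  right
  obtain ⟨w, hw, hwne⟩ := Submodule.ne_bot_iff W |>.mp hbot
  -- images of w under x and y
  have hAmem : (ϱ (Px k) : Matrix (Fin 2) (Fin 2) ℂ).mulVec w ∈ W := hW _ w hw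
  have hBmem : (ϱ (Py k) : Matrix (Fin 2) (Fin 2) ℂ).mulVec w ∈ W := hW _ w hw
  have hA : (ϱ (Px k) : Matrix (Fin 2) (Fin 2) ℂ).mulVec w
      = ![omg ^ 2 * w 1, -omg * w 0] := by
    rw [hx]; funext i
    fin_cases i <;> simp [Matrix.mulVec, dotProduct, Fin.sum_univ_two, Matrix.vecHead, Matrix.vecTail]
  have hB : (ϱ (Py k) : Matrix (Fin 2) (Fin 2) ℂ).mulVec w
      = ![omg ^ 2 * w 0 + w 1, omg ^ 2 * w 0 - omg ^ 2 * w 1] := by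
    rw [hy]; funext i
    fin_cases i <;> simp [Matrix.mulVec, dotProduct, Fin.sum_univ_two, Matrix.vecHead, Matrix.vecTail] <;> ring
  rw [hA] at hAmem; rw [hB] at hBmem
  set a : Fin 2 → ℂ := ![omg ^ 2 * w 1, -omg * w 0] with ha
  set b : Fin 2 → ℂ := ![omg ^ 2 * w 0 + w 1, omg ^ 2 * w 0 - omg ^ 2 * w 1] with hb
  have ha0 : a 0 = omg ^ 2 * w 1 := rfl
  have ha1 : a 1 = -omg * w 0 := rfl
  have hb0 : b 0 = omg ^ 2 * w 0 + w 1 := rfl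
  have hb1 : b 1 = omg ^ 2 * w 0 - omg ^ 2 * w 1 := rfl
  by_cases e1 : w 0 * a 1 - w 1 * a 0 ≠ 0
  · exact span2 W hw hAmem e1
  push_neg at e1
  by_cases e2 : w 0 * b 1 - w 1 * b 0 ≠ 0
  · exact span2 W hw hBmem e2
  push_neg at e2
  exfalso
  rw [ha0, ha1] at e1
  rw [hb0, hb1] at e2
  -- derive w = 0, a contradiction
  have key : 2 * omg ^ 2 * (w 0 * (w 0 - w 1)) = 0 := by
    linear_combination e2 - omg * e1 - (w 1) ^ 2 * h3
  have hw0 : w 0 = 0 ∧ w 1 = 0 := by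
    have h2 : (2 : ℂ) * omg ^ 2 ≠ 0 := by
      simp [hne0]
    have hcase := mul_eq_zero.mp ((mul_eq_zero.mp key).resolve_left h2)
    rcases hcase with h0 | h01
    · -- w 0 = 0 : then e1 forces w 1 = 0
      refine ⟨h0, ?_⟩
      rw [h0] at e1
      have hq : omg ^ 2 * w 1 ^ 2 = 0 := by linear_combination -e1
      have := (mul_eq_zero.mp hq).resolve_left (pow_ne_zero 2 hne0)
      exact (pow_eq_zero_iff two_ne_zero).mp this
    · -- w 0 = w 1 : then e1 forces w 0 = 0
      have hww : w 1 = w 0 := (sub_eq_zero.mp h01).symm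
      rw [hww] at e1
      have hq : w 0 ^ 2 = 0 := by linear_combination e1 + w 0 ^ 2 * hsum
      have h0 : w 0 = 0 := (pow_eq_zero_iff two_ne_zero).mp hq
      exact ⟨h0, hww.trans h0⟩
  apply hwne
  funext i
  fin_cases i
  · exact hw0.1
  · exact hw0.2
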